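/- arXiv:2208.12004 — 9 statements merged into one kernel-verified Lean document; each statement's English description precedes it below -/
import Mathlib

section
/- If R0 < 1, then all eigenvalues of the matrix J̄ (the 3×3 infectious-block Jacobian at the disease-free equilibrium, with entries as specified) have negative real part; equivalently, the characteristic polynomial p(l) = l³ + a₁l² + a₂l + a₃ satisfies the Routh–Hurwitz conditions a₁ > 0, a₃ > 0, and a₁a₂ - a₃ > 0. -/
open Matrix

lemma cubic_root_re_neg (a1 a2 a3 : ℝ) (h1 : 0 < a1) (h2 : 0 < a2) (h3 : 0 < a3)
    (h4 : 0 < a1 * a2 - a3) (z : ℂ)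
    (hz : z ^ 3 + (a1 : ℂ) * z ^ 2 + (a2 : ℂ) * z + (a3 : ℂ) = 0) : z.re < 0 := by
  set x := z.re with hx
  set y := z.im with hy
  have hzxy : z = (x : ℂ) + (y : ℂ) * Complex.I := (Complex.re_add_im z).symm
  have key : ((x^3 - 3*x*y^2 + a1*(x^2-y^2) + a2*x + a3 : ℝ) : ℂ)
      + ((3*x^2*y - y^3 + 2*a1*x*y + a2*y : ℝ) : ℂ) * Complex.I = 0 := by
    rw [show ((x^3 - 3*x*y^2 + a1*(x^2-y^2) + a2*x + a3 : ℝ) : ℂ)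
      + ((3*x^2*y - y^3 + 2*a1*x*y + a2*y : ℝ) : ℂ) * Complex.I
      = z ^ 3 + (a1 : ℂ) * z ^ 2 + (a2 : ℂ) * z + (a3 : ℂ) from by
        rw [hzxy]; push_cast; linear_combination (-((y:ℂ)^3*Complex.I) - 3*(x:ℂ)*(y:ℂ)^2 - (a1:ℂ)*(y:ℂ)^2) * Complex.I_sq]
    exact hz
  have h0 := Complex.ext_iff.mp key
  simp only [Complex.add_re, Complex.add_im, Complex.ofReal_re, Complex.ofReal_im,
    Complex.mul_re, Complex.mul_im, Complex.I_re, Complex.I_im, Complex.zero_re,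
    Complex.zero_im] at h0
  obtain ⟨ha, hb⟩ := h0
  by_contra hcon
  push_neg at hcon
  rcases eq_or_ne y 0 with hy0 | hy0
  · rw [hy0] at ha
    nlinarith [mul_nonneg (mul_nonneg hcon hcon) hcon, mul_nonneg hcon hcon,
      mul_nonneg h2.le hcon]
  · have hsub : 3*x^2 + 2*a1*x + a2 = y^2 := by
      have hfac : y * (3*x^2 - y^2 + 2*a1*x + a2) = 0 := by linarith [hb]
      have := mul_eq_zero.mp hfac
      rcases this with h | h
      · exact absurd h hy0
      · linarith
    have hcube : 8*x^3 + 8*a1*x^2 + 2*(a1^2+a2)*x + (a1*a2 - a3) = 0 := by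
      linear_combination -ha + (3*x + a1) * hsub
    nlinarith [mul_nonneg (mul_nonneg hcon hcon) hcon,
      mul_nonneg h1.le (mul_nonneg hcon hcon),
      mul_nonneg (mul_nonneg h1.le h1.le) hcon, mul_nonneg h2.le hcon]

lemma rh_core (A c d Q v0 B e P T U N D : ℝ)
    (hA : 0 < A) (hc : 0 < c) (hd : 0 < d) (hQ : 0 < Q) (he : 0 ≤ e)
    (hv0 : 0 < v0) (hv1 : v0 < 1) (hB : 0 < B)
    (hP : P = A + c) (hT : T = A * P + A * Q + P * Q) (hU : U = v0 * (P + Q) + (c + d))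
    (hN : N = (c + d) * (e + Q) + v0 * A * (c + Q)) (hD : D = A * P * Q)
    (hBN : B * N < D) :
    0 < (A + P + Q) - B * v0 ∧ 0 < T - B * U ∧ 0 < D - B * N ∧
    0 < ((A + P + Q) - B * v0) * (T - B * U) - (D - B * N) := by
  have hPpos : 0 < P := by rw [hP]; linarith
  have hNpos : 0 < N := by
    rw [hN]; nlinarith [mul_pos (add_pos hc hd) (by linarith : (0:ℝ) < e + Q),
      mul_pos (mul_pos hv0 hA) (by linarith : (0:ℝ) < c + Q)]
  have hUpos : 0 < U := by rw [hU, hP]; nlinarith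
  have hTpos : 0 < T := by rw [hT, hP]; nlinarith
  -- B * v0 < P
  have h0 : 0 ≤ B * ((c + d) * (e + Q) + v0 * A * c) :=
    mul_nonneg hB.le (add_nonneg (mul_nonneg (by linarith) (by linarith))
      (mul_nonneg (mul_nonneg hv0.le hA.le) hc.le))
  have step : (B * v0) * (A * Q) < P * (A * Q) := by
    rw [hP]; rw [hN, hD, hP] at hBN; nlinarith
  have hBv0 : B * v0 < P := lt_of_mul_lt_mul_right step (mul_nonneg hA.le hQ.le)
  have ha1 : 0 < (A + P + Q) - B * v0 := by nlinarith
  -- key: D * U ≤ N * T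
  have hNT : D * U ≤ N * T := by
    have hid : N * T - D * U
        = (c + d) * (e * T + A * Q^2 + P * Q^2) + v0 * A^2 * (c * P + c * Q + Q^2) := by
      rw [hT, hU, hN, hD, hP]; ring
    have t1 : 0 ≤ (c + d) * (e * T + A * Q^2 + P * Q^2) :=
      mul_nonneg (by linarith)
        (add_nonneg (add_nonneg (mul_nonneg he hTpos.le) (mul_nonneg hA.le (sq_nonneg Q)))
          (mul_nonneg hPpos.le (sq_nonneg Q)))
    have t4 : 0 ≤ v0 * A^2 * (c * P + c * Q + Q^2) :=
      mul_nonneg (mul_nonneg hv0.le (sq_nonneg A))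
        (add_nonneg (add_nonneg (mul_nonneg hc.le hPpos.le) (mul_nonneg hc.le hQ.le))
          (sq_nonneg Q))
    linarith
  have ha3 : 0 < D - B * N := by linarith
  have ha2 : 0 < T - B * U := by
    by_contra h
    push_neg at h
    have h1 : N * T ≤ N * (B * U) := mul_le_mul_of_nonneg_left (by linarith) hNpos.le
    have h2 : (B * N) * U < D * U := mul_lt_mul_of_pos_right hBN hUpos
    nlinarith
  have key : 0 ≤ (A + Q) * (T - B * U) - (D - B * N) := by
    rcases le_or_gt ((A + Q) * U) N with h | h
    · have h1 : 0 ≤ B * (N - (A + Q) * U) := mul_nonneg hB.le (by linarith)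
      have h2 : 0 ≤ (A + Q) * T - D := by
        have e2 : (A + Q) * T - D
            = A^2*(A+c) + A*(A+c)*Q + A^2*Q + A*Q^2 + (A+c)*Q^2 := by
          rw [hT, hD, hP]; ring
        rw [e2]
        have : (0:ℝ) ≤ A + c := by linarith
        positivity
      nlinarith
    · by_contra hlt
      push_neg at hlt
      have h1 : 0 ≤ ((A + Q) * U - N) * (D - B * N) :=
        mul_nonneg (by linarith) (by linarith)
      have h2 : (A + Q) * (D * U) ≤ (A + Q) * (N * T) :=
        mul_le_mul_of_nonneg_left hNT (by linarith)
      have h3 : N * ((A + Q) * (T - B * U) - (D - B * N)) < 0 :=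
        mul_neg_of_pos_of_neg hNpos hlt
      have e3 : N * ((A + Q) * (T - B * U) - (D - B * N))
          - ((A + Q) * U - N) * (D - B * N)
          = (A + Q) * (N * T) - (A + Q) * (D * U) := by ring
      linarith
  constructor
  · exact ha1
  constructor
  · exact ha2
  constructor
  · exact ha3
  · nlinarith [mul_pos (show (0:ℝ) < (A + P + Q) - B * v0 - (A + Q) by linarith) ha2]

/-- If `R0 < 1` then every eigenvalue of the infectious-block Jacobian `J̄` has
negative real part; equivalently the characteristic polynomial coefficients
satisfy the Routh–Hurwitz conditions `a₁ > 0`, `a₃ > 0`, `a₁a₂ - a₃ > 0`. -/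
theorem Jbar_stable_of_R0_lt_one
    (b μ β lg ν1 ν2 v0 R0 : ℝ)
    (hb : 0 < b) (hμ : 0 < μ) (hβ : 0 < β) (hlg : 0 < lg)
    (hν1 : ν1 ∈ Set.Ioo (0:ℝ) 1) (hν2 : ν2 ∈ Set.Ioo (0:ℝ) 1)
    (hv0 : v0 ∈ Set.Ioo (0:ℝ) 1)
    (hR0 : R0 = β * (b / μ) *
      (lg * ν1 * (lg * ν1 * (1 - ν2) ^ 2 + lg * ν2 * (2 - ν2) + μ)
        + v0 * (lg * ν1 + μ) * (lg * ν1 * (1 - ν1) + lg * ν2 * (2 - ν2) + μ)) /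
      ((lg * ν1 + μ) * (lg * ν1 * (2 - ν1) + μ) * (lg * ν2 * (2 - ν2) + μ)))
    (J : Matrix (Fin 3) (Fin 3) ℝ)
    (hJ : J = !![-(lg * ν1 + μ), β * b / μ, β * b / μ;
                 lg * ν1 * (1 - ν1), β * v0 * b / μ - lg * ν1 * (2 - ν1) - μ, β * v0 * b / μ;
                 lg * ν1 ^ 2, lg * ν1 * (1 - ν1), -(lg * ν2 * (2 - ν2) + μ)])
    (a1 a2 a3 : ℝ)
    (ha1 : a1 = -J.trace)
    (ha2 : a2 = (J.trace ^ 2 - (J * J).trace) / 2)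
    (ha3 : a3 = -J.det)
    (hR0lt : R0 < 1) :
    (∀ z ∈ spectrum ℂ (J.map (Complex.ofRealHom : ℝ →+* ℂ)), z.re < 0) ∧
    0 < a1 ∧ 0 < a3 ∧ 0 < a1 * a2 - a3 := by
  obtain ⟨hν1a, hν1b⟩ := hν1
  obtain ⟨hν2a, hν2b⟩ := hν2
  obtain ⟨hv0a, hv0b⟩ := hv0
  obtain ⟨A, hAdef⟩ : ∃ x : ℝ, x = lg * ν1 + μ := ⟨_, rfl⟩
  obtain ⟨c, hcdef⟩ : ∃ x : ℝ, x = lg * ν1 * (1 - ν1) := ⟨_, rfl⟩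
  obtain ⟨dd, hddef⟩ : ∃ x : ℝ, x = lg * ν1 ^ 2 := ⟨_, rfl⟩
  obtain ⟨Q, hQdef⟩ : ∃ x : ℝ, x = lg * ν2 * (2 - ν2) + μ := ⟨_, rfl⟩
  obtain ⟨B, hBdef⟩ : ∃ x : ℝ, x = β * b / μ := ⟨_, rfl⟩
  obtain ⟨e, hedef⟩ : ∃ x : ℝ, x = lg * ν1 * (1 - ν2) ^ 2 := ⟨_, rfl⟩
  obtain ⟨P, hPdef⟩ : ∃ x : ℝ, x = A + c := ⟨_, rfl⟩
  obtain ⟨T, hTdef⟩ : ∃ x : ℝ, x = A * P + A * Q + P * Q := ⟨_, rfl⟩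
  obtain ⟨U, hUdef⟩ : ∃ x : ℝ, x = v0 * (P + Q) + (c + dd) := ⟨_, rfl⟩
  obtain ⟨N, hNdef⟩ : ∃ x : ℝ, x = (c + dd) * (e + Q) + v0 * A * (c + Q) := ⟨_, rfl⟩
  obtain ⟨D, hDdef⟩ : ∃ x : ℝ, x = A * P * Q := ⟨_, rfl⟩
  have hA : 0 < A := by rw [hAdef]; positivity
  have hc : 0 < c := by
    rw [hcdef]; exact mul_pos (mul_pos hlg hν1a) (by linarith)
  have hd : 0 < dd := by rw [hddef]; positivity
  have hQ : 0 < Q := by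
    rw [hQdef]
    have : 0 < lg * ν2 * (2 - ν2) := mul_pos (mul_pos hlg hν2a) (by linarith)
    linarith
  have he : 0 ≤ e := by rw [hedef]; positivity
  have hB : 0 < B := by rw [hBdef]; positivity
  have hPpos : 0 < P := by rw [hPdef]; linarith
  have hDpos : 0 < D := by rw [hDdef]; exact mul_pos (mul_pos hA hPpos) hQ
  -- R0 < 1  gives  B * N < D
  have hBN : B * N < D := by
    have hden : ((lg * ν1 + μ) * (lg * ν1 * (2 - ν1) + μ) * (lg * ν2 * (2 - ν2) + μ)) = D := by
      rw [hDdef, hPdef, hAdef, hcdef, hQdef]; ring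
    have hnum : β * (b / μ) *
        (lg * ν1 * (lg * ν1 * (1 - ν2) ^ 2 + lg * ν2 * (2 - ν2) + μ)
          + v0 * (lg * ν1 + μ) * (lg * ν1 * (1 - ν1) + lg * ν2 * (2 - ν2) + μ)) = B * N := by
      rw [hBdef, hNdef, hAdef, hcdef, hddef, hQdef, hedef]; ring
    rw [hR0, hden, hnum] at hR0lt
    exact (div_lt_one hDpos).mp hR0lt
  -- coefficient identities
  have hA1 : a1 = (A + P + Q) - B * v0 := by
    rw [ha1, hJ, hBdef, hPdef, hAdef, hcdef, hQdef]
    simp [Matrix.trace_fin_three]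
    ring
  have hA2 : a2 = T - B * U := by
    rw [ha2, hJ, hTdef, hUdef, hBdef, hPdef, hAdef, hcdef, hddef, hQdef]
    simp [Matrix.trace_fin_three, Matrix.mul_fin_three]
    ring
  have hA3 : a3 = D - B * N := by
    rw [ha3, hJ, hDdef, hNdef, hBdef, hPdef, hAdef, hcdef, hddef, hQdef, hedef]
    simp [Matrix.det_fin_three]
    ring
  have hspec : ∀ z ∈ spectrum ℂ (J.map (Complex.ofRealHom : ℝ →+* ℂ)),
      z ^ 3 + (a1 : ℂ) * z ^ 2 + (a2 : ℂ) * z + (a3 : ℂ) = 0 := by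
    intro z hz
    rw [spectrum.mem_iff] at hz
    have hdet : (algebraMap ℂ (Matrix (Fin 3) (Fin 3) ℂ) z
        - J.map (Complex.ofRealHom : ℝ →+* ℂ)).det = 0 := by
      by_contra h
      exact hz ((Matrix.isUnit_iff_isUnit_det _).mpr (isUnit_iff_ne_zero.mpr h))
    rw [hJ] at hdet
    simp [Matrix.det_fin_three, Matrix.sub_apply, Matrix.map_apply,
      Matrix.algebraMap_matrix_apply] at hdet
    rw [hA1, hA2, hA3, hTdef, hUdef, hNdef, hDdef, hPdef, hAdef, hcdef, hddef, hQdef,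
      hedef, hBdef]
    push_cast
    linear_combination hdet
  obtain ⟨p1, p2, p3, p4⟩ :=
    rh_core A c dd Q v0 B e P T U N D hA hc hd hQ he hv0a hv0b hB
      hPdef hTdef hUdef hNdef hDdef hBN
  have q1 : 0 < a1 := by rw [hA1]; exact p1
  have q2 : 0 < a2 := by rw [hA2]; exact p2
  have q3 : 0 < a3 := by rw [hA3]; exact p3
  have q4 : 0 < a1 * a2 - a3 := by rw [hA1, hA2, hA3]; exact p4
  exact ⟨fun z hz => cubic_root_re_neg a1 a2 a3 q1 q2 q3 q4 z (hspec z hz), q1, q3, q4⟩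
end

section
/- If R0 > 1, then the matrix J̄ (infectious-block Jacobian at the disease-free equilibrium) has a real eigenvalue with positive real part; in particular the disease-free equilibrium is unstable. (It suffices to show that the characteristic polynomial p(l) = l³ + a₁l² + a₂l + a₃ has a₃ < 0, whence p has a positive real root.) -/
set_option maxHeartbeats 1000000


open Matrix

/-- If `R0 > 1`, the infectious-block Jacobian `J̄` has a positive real eigenvalue,
so the disease-free equilibrium is unstable. -/
theorem Jbar_unstable_of_R0_gt_one
    (b μ β lg ν1 ν2 v0 R0 : ℝ)
    (hb : 0 < b) (hμ : 0 < μ) (hβ : 0 < β) (hlg : 0 < lg)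
    (hν1 : ν1 ∈ Set.Ioo (0:ℝ) 1) (hν2 : ν2 ∈ Set.Ioo (0:ℝ) 1)
    (hv0 : v0 ∈ Set.Ioo (0:ℝ) 1)
    (hR0 : R0 = β * (b / μ) *
      (lg * ν1 * (lg * ν1 * (1 - ν2) ^ 2 + lg * ν2 * (2 - ν2) + μ)
        + v0 * (lg * ν1 + μ) * (lg * ν1 * (1 - ν1) + lg * ν2 * (2 - ν2) + μ)) /
      ((lg * ν1 + μ) * (lg * ν1 * (2 - ν1) + μ) * (lg * ν2 * (2 - ν2) + μ)))
    (J : Matrix (Fin 3) (Fin 3) ℝ)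
    (hJ : J = !![-(lg * ν1 + μ), β * b / μ, β * b / μ;
                 lg * ν1 * (1 - ν1), β * v0 * b / μ - lg * ν1 * (2 - ν1) - μ, β * v0 * b / μ;
                 lg * ν1 ^ 2, lg * ν1 * (1 - ν1), -(lg * ν2 * (2 - ν2) + μ)])
    (hR0gt : 1 < R0) :
    ∃ l : ℝ, 0 < l ∧ l ∈ spectrum ℝ J := by
  obtain ⟨hν1a, hν1b⟩ := hν1
  obtain ⟨hν2a, hν2b⟩ := hν2
  obtain ⟨hv0a, hv0b⟩ := hv0
  have hμ0 : μ ≠ 0 := ne_of_gt hμ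
  set N : ℝ := β * (b / μ) *
      (lg * ν1 * (lg * ν1 * (1 - ν2) ^ 2 + lg * ν2 * (2 - ν2) + μ)
        + v0 * (lg * ν1 + μ) * (lg * ν1 * (1 - ν1) + lg * ν2 * (2 - ν2) + μ)) with hN
  set D : ℝ := (lg * ν1 + μ) * (lg * ν1 * (2 - ν1) + μ) * (lg * ν2 * (2 - ν2) + μ) with hD
  have hDpos : 0 < D := by
    have h1 : 0 < lg * ν1 + μ := by nlinarith [mul_pos hlg hν1a]
    have h2 : 0 < lg * ν1 * (2 - ν1) + μ := by nlinarith [mul_pos hlg hν1a]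
    have h3 : 0 < lg * ν2 * (2 - ν2) + μ := by nlinarith [mul_pos hlg hν2a]
    exact mul_pos (mul_pos h1 h2) h3
  have hND : D < N := by
    rw [hR0] at hR0gt
    have := (one_lt_div hDpos).mp hR0gt
    linarith
  -- the characteristic-type polynomial
  obtain ⟨A, B, hpoly⟩ : ∃ A B : ℝ, ∀ l : ℝ,
      ((l • (1 : Matrix (Fin 3) (Fin 3) ℝ) - J)).det
        = l ^ 3 + A * l ^ 2 + B * l + (D - N) := by
    refine ⟨((1:ℝ) • (1 : Matrix (Fin 3) (Fin 3) ℝ) - J).det / 2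
        + (((-1:ℝ)) • (1 : Matrix (Fin 3) (Fin 3) ℝ) - J).det / 2 - (D - N),
      ((1:ℝ) • (1 : Matrix (Fin 3) (Fin 3) ℝ) - J).det / 2
        - (((-1:ℝ)) • (1 : Matrix (Fin 3) (Fin 3) ℝ) - J).det / 2 - 1,
      fun l => ?_⟩
    subst hJ
    simp only [Matrix.det_fin_three, Matrix.sub_apply, Matrix.smul_apply,
      Matrix.one_apply, Matrix.cons_val', Matrix.cons_val_zero, Matrix.cons_val_one,
      Matrix.head_cons, Matrix.head_fin_const, Matrix.empty_val', Matrix.cons_val_fin_one,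
      Matrix.of_apply, Matrix.cons_val_two, Matrix.tail_cons, smul_eq_mul]
    norm_num [Fin.ext_iff]
    ring
  set M : ℝ := 1 + |A| + |B| + |D - N| with hM
  have hMpos : 0 < M := by
    have := abs_nonneg A; have := abs_nonneg B; have := abs_nonneg (D - N)
    linarith
  have hM1 : 1 ≤ M := by
    have := abs_nonneg A; have := abs_nonneg B; have := abs_nonneg (D - N)
    linarith
  set f : ℝ → ℝ := fun l => l ^ 3 + A * l ^ 2 + B * l + (D - N) with hf
  have hf0 : f 0 < 0 := by simp [hf]; linarith
  have hfM : 0 < f M := by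
    have h1 : -|A| ≤ A := neg_abs_le A
    have h2 : -|B| ≤ B := neg_abs_le B
    have h3 : -|D - N| ≤ D - N := neg_abs_le (D - N)
    have hA := abs_nonneg A; have hB := abs_nonneg B; have hDN := abs_nonneg (D - N)
    have hMM : M ≤ M ^ 2 := by nlinarith [mul_nonneg hMpos.le (sub_nonneg.mpr hM1)]
    have eM2 : 1 ≤ M ^ 2 := le_trans hM1 hMM
    have key : M ^ 2 ≤ f M := by
      have e1 : 0 ≤ (A + |A|) * M ^ 2 :=
        mul_nonneg (by linarith) (sq_nonneg M)
      have e2 : 0 ≤ (B + |B|) * M :=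
        mul_nonneg (by linarith) (le_of_lt hMpos)
      have e3 : 0 ≤ (D - N) + |D - N| := by linarith
      have eBM : |B| * M ≤ |B| * M ^ 2 := mul_le_mul_of_nonneg_left hMM hB
      have eDN : |D - N| ≤ |D - N| * M ^ 2 := by
        have := mul_le_mul_of_nonneg_left eM2 hDN
        linarith [this]
      have expand : M ^ 3 = M ^ 2 * (|A| + |B| + |D - N|) + M ^ 2 := by
        rw [hM]; ring
      have hfMeq : f M = M ^ 3 + A * M ^ 2 + B * M + (D - N) := rfl
      rw [hfMeq]
      nlinarith [e1, e2, e3, eBM, eDN, expand]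
    have hM2pos : 0 < M ^ 2 := pow_pos hMpos 2
    linarith
  have hcont : Continuous f := by
    have : f = fun l => l ^ 3 + A * l ^ 2 + B * l + (D - N) := rfl
    rw [this]; continuity
  have hsub := intermediate_value_Ioc (le_of_lt hMpos) hcont.continuousOn
  have h0mem : (0:ℝ) ∈ Set.Ioc (f 0) (f M) := ⟨hf0, le_of_lt hfM⟩
  obtain ⟨l, hl, hfl⟩ := hsub h0mem
  refine ⟨l, hl.1, ?_⟩
  rw [spectrum.mem_iff]
  have heq : algebraMap ℝ (Matrix (Fin 3) (Fin 3) ℝ) l - J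
      = l • (1 : Matrix (Fin 3) (Fin 3) ℝ) - J := by
    rw [Algebra.algebraMap_eq_smul_one]
  rw [heq, Matrix.isUnit_iff_isUnit_det]
  rw [hpoly l]
  have : l ^ 3 + A * l ^ 2 + B * l + (D - N) = f l := rfl
  rw [this, hfl]
  simp
end

section
/- Suppose R0 > 1. Define ρ_S^E = (b/μ)(1/R0), ρ_{I1}^E = b(1 - 1/R0)/(λγν1+μ), ρ_{I2}^E = b λγν1 (1 - 1/R0)/((λγν1+μ)(λγν2+μ)), n_{I1}^E = b[λγν1(1-ν1) + v0(λγν1+μ)](1 - 1/R0)/((λγν1+μ)(λγν1(2-ν1)+μ)), and n_{I2}^E = (μ/β)·[λγν1²(λγ+μ) + v0λγν1(1-ν1)(λγν1+μ)]·(R0 - 1)/[λγν1(λγν1(1-ν2)² + λγν2(2-ν2) + μ) + v0(λγν1+μ)(λγν1(1-ν1) + λγν2(2-ν2) + μ)]. Then all five quantities are strictly positive and the point (ρ_S^E, ρ_{I1}^E, ρ_{I2}^E, n_{I1}^E, n_{I2}^E) is an equilibrium of system (macro2), i.e., all five right-hand sides of the system vanish there. -/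
set_option maxHeartbeats 1000000 in
/-- If `R0 > 1`, the explicitly given endemic point has all five components
strictly positive and is an equilibrium of system (macro2). -/
theorem endemic_equilibrium_exists
    (b μ β lg ν1 ν2 v0 R0 : ℝ)
    (hb : 0 < b) (hμ : 0 < μ) (hβ : 0 < β) (hlg : 0 < lg)
    (hν1 : ν1 ∈ Set.Ioo (0:ℝ) 1) (hν2 : ν2 ∈ Set.Ioo (0:ℝ) 1)
    (hv0 : v0 ∈ Set.Ioo (0:ℝ) 1)
    (hR0 : R0 = β * (b / μ) *
      (lg * ν1 * (lg * ν1 * (1 - ν2) ^ 2 + lg * ν2 * (2 - ν2) + μ)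
        + v0 * (lg * ν1 + μ) * (lg * ν1 * (1 - ν1) + lg * ν2 * (2 - ν2) + μ)) /
      ((lg * ν1 + μ) * (lg * ν1 * (2 - ν1) + μ) * (lg * ν2 * (2 - ν2) + μ)))
    (hR0gt : 1 < R0)
    (ρS ρI1 ρI2 nI1 nI2 : ℝ)
    (hρS : ρS = (b / μ) * (1 / R0))
    (hρI1 : ρI1 = b * (1 - 1 / R0) / (lg * ν1 + μ))
    (hρI2 : ρI2 = b * (lg * ν1) * (1 - 1 / R0) / ((lg * ν1 + μ) * (lg * ν2 + μ)))
    (hnI1 : nI1 = b * (lg * ν1 * (1 - ν1) + v0 * (lg * ν1 + μ)) * (1 - 1 / R0) /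
      ((lg * ν1 + μ) * (lg * ν1 * (2 - ν1) + μ)))
    (hnI2 : nI2 = (μ / β) *
      (lg * ν1 ^ 2 * (lg + μ) + v0 * lg * ν1 * (1 - ν1) * (lg * ν1 + μ)) * (R0 - 1) /
      (lg * ν1 * (lg * ν1 * (1 - ν2) ^ 2 + lg * ν2 * (2 - ν2) + μ)
        + v0 * (lg * ν1 + μ) * (lg * ν1 * (1 - ν1) + lg * ν2 * (2 - ν2) + μ))) :
    (0 < ρS ∧ 0 < ρI1 ∧ 0 < ρI2 ∧ 0 < nI1 ∧ 0 < nI2) ∧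
    b - β * ρS * (nI1 + nI2) - μ * ρS = 0 ∧
    β * ρS * (nI1 + nI2) - lg * ν1 * ρI1 - μ * ρI1 = 0 ∧
    lg * ν1 * ρI1 - lg * ν2 * ρI2 - μ * ρI2 = 0 ∧
    β * v0 * ρS * (nI1 + nI2) + lg * ν1 * (1 - ν1) * ρI1
      - lg * ν1 * (2 - ν1) * nI1 - μ * nI1 = 0 ∧
    lg * ν1 ^ 2 * ρI1 + lg * ν1 * (1 - ν1) * nI1
      - lg * ν2 * (2 - ν2) * nI2 - μ * nI2 = 0 := by
  obtain ⟨hν1a, hν1b⟩ := hν1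
  obtain ⟨hν2a, hν2b⟩ := hν2
  obtain ⟨hv0a, hv0b⟩ := hv0
  have hR0pos : 0 < R0 := lt_trans one_pos hR0gt
  have hfrac : 0 < 1 - 1 / R0 := by
    rw [sub_pos]; exact (div_lt_one hR0pos).mpr hR0gt
  have h2ν1 : 0 < 2 - ν1 := by linarith
  have h2ν2 : 0 < 2 - ν2 := by linarith
  have h1ν1 : 0 < 1 - ν1 := by linarith
  have hd1 : 0 < lg * ν1 + μ := by positivity
  have hd2 : 0 < lg * ν1 * (2 - ν1) + μ := by
    have := mul_pos (mul_pos hlg hν1a) h2ν1; linarith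
  have hd3 : 0 < lg * ν2 * (2 - ν2) + μ := by
    have := mul_pos (mul_pos hlg hν2a) h2ν2; linarith
  have hd4 : 0 < lg * ν2 + μ := by positivity
  have hN : 0 < lg * ν1 * (lg * ν1 * (1 - ν2) ^ 2 + lg * ν2 * (2 - ν2) + μ)
      + v0 * (lg * ν1 + μ) * (lg * ν1 * (1 - ν1) + lg * ν2 * (2 - ν2) + μ) := by
    have hin1 : 0 < lg * ν1 * (1 - ν2) ^ 2 + lg * ν2 * (2 - ν2) + μ := by
      have h := mul_pos (mul_pos hlg hν2a) h2ν2
      have h2 : 0 ≤ lg * ν1 * (1 - ν2) ^ 2 := by positivity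
      linarith
    have hin2 : 0 < lg * ν1 * (1 - ν1) + lg * ν2 * (2 - ν2) + μ := by
      have h := mul_pos (mul_pos hlg hν2a) h2ν2
      have h2 : 0 < lg * ν1 * (1 - ν1) := mul_pos (mul_pos hlg hν1a) h1ν1
      linarith
    have h1 := mul_pos (mul_pos hlg hν1a) hin1
    have h2 := mul_pos (mul_pos hv0a hd1) hin2
    linarith
  have hbne := hb.ne'
  have hμne := hμ.ne'
  have hβne := hβ.ne'
  have hR0ne := hR0pos.ne'
  have hd1ne := hd1.ne'
  have hd2ne := hd2.ne'
  have hd3ne := hd3.ne'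
  have hd4ne := hd4.ne'
  have hNne := hN.ne'
  -- key polynomial relation from the definition of R0
  have hkey : β * b * (lg * ν1 * (lg * ν1 * (1 - ν2) ^ 2 + lg * ν2 * (2 - ν2) + μ)
      + v0 * (lg * ν1 + μ) * (lg * ν1 * (1 - ν1) + lg * ν2 * (2 - ν2) + μ))
      = R0 * (μ * ((lg * ν1 + μ) * ((lg * ν1 * (2 - ν1) + μ) * (lg * ν2 * (2 - ν2) + μ)))) := by
    rw [hR0]; field_simp
    try ring
    try tauto
  -- cleared-denominator forms of the coordinates
  have hnI1' : nI1 * (R0 * ((lg * ν1 + μ) * (lg * ν1 * (2 - ν1) + μ)))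
      = b * (lg * ν1 * (1 - ν1) + v0 * (lg * ν1 + μ)) * (R0 - 1) := by
    rw [hnI1]; field_simp
    try ring
  have hnI2' : nI2 * (β * (lg * ν1 * (lg * ν1 * (1 - ν2) ^ 2 + lg * ν2 * (2 - ν2) + μ)
      + v0 * (lg * ν1 + μ) * (lg * ν1 * (1 - ν1) + lg * ν2 * (2 - ν2) + μ)))
      = μ * (lg * ν1 ^ 2 * (lg + μ) + v0 * lg * ν1 * (1 - ν1) * (lg * ν1 + μ)) * (R0 - 1) := by
    rw [hnI2]; field_simp
    try ring
  have hρI1' : ρI1 * (R0 * (lg * ν1 + μ)) = b * (R0 - 1) := by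
    rw [hρI1]; field_simp
    try ring
  -- the crucial simplification of nI1 + nI2
  have hsumC : (β * (nI1 + nI2) - μ * (R0 - 1)) *
      (R0 * ((lg * ν1 + μ) * (lg * ν1 * (2 - ν1) + μ)) *
        (lg * ν1 * (lg * ν1 * (1 - ν2) ^ 2 + lg * ν2 * (2 - ν2) + μ)
          + v0 * (lg * ν1 + μ) * (lg * ν1 * (1 - ν1) + lg * ν2 * (2 - ν2) + μ))) = 0 := by
    linear_combination
      (β * (lg * ν1 * (lg * ν1 * (1 - ν2) ^ 2 + lg * ν2 * (2 - ν2) + μ)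
        + v0 * (lg * ν1 + μ) * (lg * ν1 * (1 - ν1) + lg * ν2 * (2 - ν2) + μ))) * hnI1'
      + (R0 * ((lg * ν1 + μ) * (lg * ν1 * (2 - ν1) + μ))) * hnI2'
      + ((lg * ν1 * (1 - ν1) + v0 * (lg * ν1 + μ)) * (R0 - 1)) * hkey
  have hsum : β * (nI1 + nI2) = μ * (R0 - 1) := by
    have hC : R0 * ((lg * ν1 + μ) * (lg * ν1 * (2 - ν1) + μ)) *
        (lg * ν1 * (lg * ν1 * (1 - ν2) ^ 2 + lg * ν2 * (2 - ν2) + μ)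
          + v0 * (lg * ν1 + μ) * (lg * ν1 * (1 - ν1) + lg * ν2 * (2 - ν2) + μ)) ≠ 0 := by
      positivity
    have := (mul_eq_zero.mp hsumC).resolve_right hC
    linarith
  refine ⟨⟨?_, ?_, ?_, ?_, ?_⟩, ?_, ?_, ?_, ?_, ?_⟩
  · rw [hρS]; exact mul_pos (div_pos hb hμ) (one_div_pos.mpr hR0pos)
  · rw [hρI1]; exact div_pos (mul_pos hb hfrac) hd1
  · rw [hρI2]
    exact div_pos (mul_pos (mul_pos hb (mul_pos hlg hν1a)) hfrac) (mul_pos hd1 hd4)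
  · rw [hnI1]
    refine div_pos (mul_pos (mul_pos hb ?_) hfrac) (mul_pos hd1 hd2)
    have h1 := mul_pos (mul_pos hlg hν1a) h1ν1
    have h2 := mul_pos hv0a hd1
    linarith
  · rw [hnI2]
    refine div_pos (mul_pos (mul_pos (div_pos hμ hβ) ?_) (by linarith)) hN
    have h1 : 0 < lg * ν1 ^ 2 * (lg + μ) := by positivity
    have h2 : 0 < v0 * lg * ν1 * (1 - ν1) * (lg * ν1 + μ) := by
      have := mul_pos (mul_pos (mul_pos (mul_pos hv0a hlg) hν1a) h1ν1) hd1
      linarith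
    linarith
  · -- equation 1
    rw [hρS]
    have h : β * ((b / μ) * (1 / R0)) * (nI1 + nI2)
        = (b / μ) * (1 / R0) * (μ * (R0 - 1)) := by
      rw [← hsum]; ring
    rw [h]; field_simp; ring
  · -- equation 2
    rw [hρS]
    have h : β * ((b / μ) * (1 / R0)) * (nI1 + nI2)
        = (b / μ) * (1 / R0) * (μ * (R0 - 1)) := by
      rw [← hsum]; ring
    rw [h, hρI1]; field_simp; ring
  · -- equation 3
    rw [hρI1, hρI2]; field_simp; ring
  · -- equation 4
    rw [hρS]
    have h : β * v0 * ((b / μ) * (1 / R0)) * (nI1 + nI2)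
        = v0 * ((b / μ) * (1 / R0)) * (μ * (R0 - 1)) := by
      rw [← hsum]; ring
    rw [h, hρI1, hnI1]; field_simp; ring
  · -- equation 5
    have hC : β * (R0 * ((lg * ν1 + μ) * (lg * ν1 * (2 - ν1) + μ))) *
        (lg * ν1 * (lg * ν1 * (1 - ν2) ^ 2 + lg * ν2 * (2 - ν2) + μ)
          + v0 * (lg * ν1 + μ) * (lg * ν1 * (1 - ν1) + lg * ν2 * (2 - ν2) + μ)) ≠ 0 := by
      positivity
    have hE : (lg * ν1 ^ 2 * ρI1 + lg * ν1 * (1 - ν1) * nI1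
        - lg * ν2 * (2 - ν2) * nI2 - μ * nI2) *
        (β * (R0 * ((lg * ν1 + μ) * (lg * ν1 * (2 - ν1) + μ))) *
        (lg * ν1 * (lg * ν1 * (1 - ν2) ^ 2 + lg * ν2 * (2 - ν2) + μ)
          + v0 * (lg * ν1 + μ) * (lg * ν1 * (1 - ν1) + lg * ν2 * (2 - ν2) + μ))) = 0 := by
      linear_combination
        (lg * ν1 ^ 2 * β * (lg * ν1 * (2 - ν1) + μ) *
          (lg * ν1 * (lg * ν1 * (1 - ν2) ^ 2 + lg * ν2 * (2 - ν2) + μ)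
            + v0 * (lg * ν1 + μ) * (lg * ν1 * (1 - ν1) + lg * ν2 * (2 - ν2) + μ))) * hρI1'
        + (lg * ν1 * (1 - ν1) * β *
          (lg * ν1 * (lg * ν1 * (1 - ν2) ^ 2 + lg * ν2 * (2 - ν2) + μ)
            + v0 * (lg * ν1 + μ) * (lg * ν1 * (1 - ν1) + lg * ν2 * (2 - ν2) + μ))) * hnI1'
        - ((lg * ν2 * (2 - ν2) + μ) * R0 * ((lg * ν1 + μ) * (lg * ν1 * (2 - ν1) + μ))) * hnI2'
        + ((lg * ν1 ^ 2 * (lg + μ) + v0 * lg * ν1 * (1 - ν1) * (lg * ν1 + μ)) * (R0 - 1)) * hkey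
    exact (mul_eq_zero.mp hE).resolve_right hC
end

section
/- If R0 ≤ 1 then the system (macro2) has no endemic equilibrium: there is no equilibrium point (ρ_S, ρ_{I1}, ρ_{I2}, n_{I1}, n_{I2}) in the invariant region D with ρ_{I1} + ρ_{I2} > 0. In particular, any equilibrium with nonnegative components and ρ_{I1} + ρ_{I2} > 0 forces R0 > 1. -/
/-- If `R0 ≤ 1` then system (macro2) has no endemic equilibrium in the invariant
region `D`: any equilibrium in `D` with `ρ_{I1} + ρ_{I2} > 0` forces `R0 > 1`. -/
theorem no_endemic_equilibrium_of_R0_le_one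
    (b μ β lg ν1 ν2 v0 R0 : ℝ)
    (hb : 0 < b) (hμ : 0 < μ) (hβ : 0 < β) (hlg : 0 < lg)
    (hν1 : ν1 ∈ Set.Ioo (0:ℝ) 1) (hν2 : ν2 ∈ Set.Ioo (0:ℝ) 1)
    (hv0 : v0 ∈ Set.Ioo (0:ℝ) 1)
    (hR0 : R0 = β * (b / μ) *
      (lg * ν1 * (lg * ν1 * (1 - ν2) ^ 2 + lg * ν2 * (2 - ν2) + μ)
        + v0 * (lg * ν1 + μ) * (lg * ν1 * (1 - ν1) + lg * ν2 * (2 - ν2) + μ)) /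
      ((lg * ν1 + μ) * (lg * ν1 * (2 - ν1) + μ) * (lg * ν2 * (2 - ν2) + μ)))
    (hR0le : R0 ≤ 1) :
    ¬ ∃ ρS ρI1 ρI2 nI1 nI2 : ℝ,
      (ρS ∈ Set.Icc (0:ℝ) 1 ∧ ρI1 ∈ Set.Icc (0:ℝ) 1 ∧ ρI2 ∈ Set.Icc (0:ℝ) 1 ∧
        nI1 ∈ Set.Icc (0:ℝ) 1 ∧ nI2 ∈ Set.Icc (0:ℝ) 1 ∧
        0 < ρS + ρI1 + ρI2 ∧ ρS + ρI1 + ρI2 ≤ b / μ ∧ nI1 ≤ ρI1 ∧ nI2 ≤ ρI2) ∧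
      0 < ρI1 + ρI2 ∧
      b - β * ρS * (nI1 + nI2) - μ * ρS = 0 ∧
      β * ρS * (nI1 + nI2) - lg * ν1 * ρI1 - μ * ρI1 = 0 ∧
      lg * ν1 * ρI1 - lg * ν2 * ρI2 - μ * ρI2 = 0 ∧
      β * v0 * ρS * (nI1 + nI2) + lg * ν1 * (1 - ν1) * ρI1
        - lg * ν1 * (2 - ν1) * nI1 - μ * nI1 = 0 ∧
      lg * ν1 ^ 2 * ρI1 + lg * ν1 * (1 - ν1) * nI1
        - lg * ν2 * (2 - ν2) * nI2 - μ * nI2 = 0 := by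
  rintro ⟨ρS, ρI1, ρI2, nI1, nI2,
    ⟨hS, hI1, hI2, hn1, hn2, hsum, hsumle, hn1le, hn2le⟩, hIpos, e1, e2, e3, e4, e5⟩
  obtain ⟨hν1a, hν1b⟩ := hν1
  obtain ⟨hν2a, hν2b⟩ := hν2
  obtain ⟨hv0a, hv0b⟩ := hv0
  set Num : ℝ := lg * ν1 * (lg * ν1 * (1 - ν2) ^ 2 + lg * ν2 * (2 - ν2) + μ)
      + v0 * (lg * ν1 + μ) * (lg * ν1 * (1 - ν1) + lg * ν2 * (2 - ν2) + μ) with hNum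
  set Den : ℝ := (lg * ν1 + μ) * (lg * ν1 * (2 - ν1) + μ) * (lg * ν2 * (2 - ν2) + μ) with hDen
  clear_value Num Den
  have ha : 0 < lg * ν1 := mul_pos hlg hν1a
  have hc : 0 < lg * ν2 := mul_pos hlg hν2a
  have hc2 : 0 < lg * ν2 * (2 - ν2) := mul_pos hc (by linarith)
  have ha1 : (0:ℝ) ≤ lg * ν1 * (1 - ν1) := mul_nonneg ha.le (by linarith)
  have hsq : (0:ℝ) ≤ lg * ν1 * (1 - ν2) ^ 2 := by positivity
  have hNumpos : 0 < Num := by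
    have t1 : 0 < lg * ν1 * (lg * ν1 * (1 - ν2) ^ 2 + lg * ν2 * (2 - ν2) + μ) :=
      mul_pos ha (by linarith)
    have t2 : 0 < v0 * (lg * ν1 + μ) * (lg * ν1 * (1 - ν1) + lg * ν2 * (2 - ν2) + μ) :=
      mul_pos (mul_pos hv0a (by linarith)) (by linarith)
    rw [hNum]; linarith
  have hDenpos : 0 < Den := by
    have h1 : 0 < lg * ν1 + μ := by linarith
    have h2 : 0 < lg * ν1 * (2 - ν1) + μ := by nlinarith
    have h3 : 0 < lg * ν2 * (2 - ν2) + μ := by linarith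
    rw [hDen]; positivity
  -- ρI1 > 0
  have hI1pos : 0 < ρI1 := by
    rcases lt_or_eq_of_le hI1.1 with h | h
    · exact h
    · exfalso
      have h3' : (lg * ν2 + μ) * ρI2 = 0 := by linear_combination (-(lg * ν1)) * h - e3
      have hI2zero : ρI2 = 0 :=
        (mul_eq_zero.mp h3').resolve_left (by positivity)
      rw [hI2zero, ← h] at hIpos
      norm_num at hIpos
  -- βρS x = (a+μ)ρI1 > 0
  have h2 : β * ρS * (nI1 + nI2) = (lg * ν1 + μ) * ρI1 := by linarith
  have hxpos : 0 < β * ρS * (nI1 + nI2) := by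
    rw [h2]; positivity
  -- A nI1 = (v0(a+μ) + a(1-ν1)) ρI1
  have hn1eq : (lg * ν1 * (2 - ν1) + μ) * nI1
      = (v0 * (lg * ν1 + μ) + lg * ν1 * (1 - ν1)) * ρI1 := by
    linear_combination v0 * h2 - e4
  have hn2eq : (lg * ν2 * (2 - ν2) + μ) * nI2
      = lg * ν1 ^ 2 * ρI1 + lg * ν1 * (1 - ν1) * nI1 := by
    linarith
  have hACx : (lg * ν1 * (2 - ν1) + μ) * (lg * ν2 * (2 - ν2) + μ) * (nI1 + nI2)
      = Num * ρI1 := by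
    rw [hNum]
    linear_combination ((lg * ν2 * (2 - ν2) + μ) + lg * ν1 * (1 - ν1)) * hn1eq
      + (lg * ν1 * (2 - ν1) + μ) * hn2eq
  have hkey : (β * ρS * Num) * ρI1 = Den * ρI1 := by
    rw [hDen]
    linear_combination (-(β * ρS)) * hACx
      + (lg * ν1 * (2 - ν1) + μ) * (lg * ν2 * (2 - ν2) + μ) * h2
  have hkey2 : β * ρS * Num = Den := mul_right_cancel₀ (ne_of_gt hI1pos) hkey
  -- μ ρS < b
  have hSlt : ρS < b / μ := by
    rw [lt_div_iff₀ hμ]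
    have hb' : b = β * ρS * (nI1 + nI2) + μ * ρS := by linarith
    have : ρS * μ = μ * ρS := by ring
    linarith [hxpos]
  -- conclude R0 > 1
  have : Den < β * (b / μ) * Num := by
    calc Den = β * ρS * Num := hkey2.symm
    _ < β * (b / μ) * Num := by
        have := mul_lt_mul_of_pos_right (mul_lt_mul_of_pos_left hSlt hβ) hNumpos
        linarith [this]
  have hR0gt : 1 < R0 := by
    rw [hR0, lt_div_iff₀ hDenpos]
    linarith
  linarith
end

section
/- At any equilibrium of system (macro2) with ρ_{I1}+ρ_{I2} > 0, the relations ρ_{I2} = ρ_{I1}·λγν1/(λγν2+μ) and ρ_{I1} = n_{I1}·(λγν1(2-ν1)+μ)/(λγν1(1-ν1) + v0(λγν1+μ)) hold. -/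
/-- At any endemic equilibrium of (macro2), the relations
`ρ_{I2} = ρ_{I1}·lgν1/(lgν2+μ)` and
`ρ_{I1} = n_{I1}·(lgν1(2-ν1)+μ)/(lgν1(1-ν1)+v0(lgν1+μ))` hold. -/
theorem endemic_equilibrium_relations
    (b μ β lg ν1 ν2 v0 : ℝ)
    (hb : 0 < b) (hμ : 0 < μ) (hβ : 0 < β) (hlg : 0 < lg)
    (hν1 : ν1 ∈ Set.Ioo (0:ℝ) 1) (hν2 : ν2 ∈ Set.Ioo (0:ℝ) 1)
    (hv0 : v0 ∈ Set.Ioo (0:ℝ) 1)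
    (ρS ρI1 ρI2 nI1 nI2 : ℝ)
    (hpos : 0 < ρI1 + ρI2)
    (e1 : b - β * ρS * (nI1 + nI2) - μ * ρS = 0)
    (e2 : β * ρS * (nI1 + nI2) - lg * ν1 * ρI1 - μ * ρI1 = 0)
    (e3 : lg * ν1 * ρI1 - lg * ν2 * ρI2 - μ * ρI2 = 0)
    (e4 : β * v0 * ρS * (nI1 + nI2) + lg * ν1 * (1 - ν1) * ρI1
        - lg * ν1 * (2 - ν1) * nI1 - μ * nI1 = 0)
    (e5 : lg * ν1 ^ 2 * ρI1 + lg * ν1 * (1 - ν1) * nI1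
        - lg * ν2 * (2 - ν2) * nI2 - μ * nI2 = 0) :
    ρI2 = ρI1 * (lg * ν1) / (lg * ν2 + μ) ∧
    ρI1 = nI1 * (lg * ν1 * (2 - ν1) + μ) / (lg * ν1 * (1 - ν1) + v0 * (lg * ν1 + μ)) := by
  obtain ⟨h1, h1'⟩ := hν1
  obtain ⟨h2, h2'⟩ := hν2
  obtain ⟨h0, h0'⟩ := hv0
  have d1 : lg * ν2 + μ ≠ 0 := by positivity
  have d2 : lg * ν1 * (1 - ν1) + v0 * (lg * ν1 + μ) ≠ 0 := by
    have : 0 < lg * ν1 * (1 - ν1) + v0 * (lg * ν1 + μ) := by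
      have : 0 < 1 - ν1 := by linarith
      positivity
    linarith
  constructor
  · field_simp
    linarith
  · field_simp
    nlinarith [e2, e4, mul_comm v0 (β * ρS * (nI1 + nI2))]
end

section
/- Setting ν1 = ν2 = 1 in the reproduction number formulas gives R0^v = β^v (b/μ)·(λγ + v0(λγ+μ))/(λγ+μ)² and R0^c = β^c (b/μ)·(2λγ+μ)/(λγ+μ)². Moreover, with β^v = β^c/M (M ∈ (0,1)), sign(R0^v - R0^c) = sign((1-M)λγ - (M - v0)(λγ+μ)). -/
/-- At `ν1 = ν2 = 1` the reproduction numbers reduce to the stated formulas, and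
with `β^v = β^c/M` the sign of `R0^v - R0^c` equals the sign of
`(1-M)lg - (M-v0)(lg+μ)`. -/
theorem R0_nu_one_limit
    (b μ βc lg v0 M βv R0v R0c : ℝ)
    (hb : 0 < b) (hμ : 0 < μ) (hβc : 0 < βc) (hlg : 0 < lg)
    (hv0 : v0 ∈ Set.Ioo (0:ℝ) 1) (hM : M ∈ Set.Ioo (0:ℝ) 1)
    (hβv : βv = βc / M)
    (hR0v : R0v = βv * (b / μ) *
      (lg * 1 * (lg * 1 * (1 - 1) ^ 2 + lg * 1 * (2 - 1) + μ)
        + v0 * (lg * 1 + μ) * (lg * 1 * (1 - 1) + lg * 1 * (2 - 1) + μ)) /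
      ((lg * 1 + μ) * (lg * 1 * (2 - 1) + μ) * (lg * 1 * (2 - 1) + μ)))
    (hR0c : R0c = βc * (b / μ) * (lg * 1 + lg * 1 + μ) / ((lg * 1 + μ) * (lg * 1 + μ))) :
    R0v = βv * (b / μ) * (lg + v0 * (lg + μ)) / (lg + μ) ^ 2 ∧
    R0c = βc * (b / μ) * (2 * lg + μ) / (lg + μ) ^ 2 ∧
    Real.sign (R0v - R0c) = Real.sign ((1 - M) * lg - (M - v0) * (lg + μ)) := by
  have hM0 : 0 < M := hM.1
  have hlgμ : 0 < lg + μ := by linarith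
  have h1 : R0v = βv * (b / μ) * (lg + v0 * (lg + μ)) / (lg + μ) ^ 2 := by
    rw [hR0v]; field_simp; ring
  have h2 : R0c = βc * (b / μ) * (2 * lg + μ) / (lg + μ) ^ 2 := by
    rw [hR0c]; ring
  refine ⟨h1, h2, ?_⟩
  have hc : 0 < βc * b / (μ * M * (lg + μ) ^ 2) := by positivity
  have key : R0v - R0c =
      (βc * b / (μ * M * (lg + μ) ^ 2)) * ((1 - M) * lg - (M - v0) * (lg + μ)) := by
    rw [h1, h2, hβv]
    field_simp
    ring
  set E := (1 - M) * lg - (M - v0) * (lg + μ) with hE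
  rcases lt_trichotomy E 0 with h | h | h
  · rw [key, Real.sign_of_neg (by nlinarith), Real.sign_of_neg h]
  · rw [key, h, mul_zero]
  · rw [key, Real.sign_of_pos (by nlinarith), Real.sign_of_pos h]
end

section
/- For the constant-transmission SIR model ρ_S' = b - βρ_S(ρ_{I1}+ρ_{I2}) - μρ_S, ρ_{I1}' = βρ_S(ρ_{I1}+ρ_{I2}) - (λγν1+μ)ρ_{I1}, ρ_{I2}' = λγν1ρ_{I1} - (λγν2+μ)ρ_{I2}, the point (b/μ, 0, 0) is an equilibrium, and the Jacobian of the infectious subsystem at it, namely the 2×2 matrix A = [[βb/μ - λγν1 - μ, βb/μ],[λγν1, -(λγν2+μ)]], satisfies: both eigenvalues of A have negative real part if and only if R0^c := β(b/μ)(λγν1+λγν2+μ)/((λγν1+μ)(λγν2+μ)) < 1. (Equivalently, trace(A) < 0 and det(A) > 0 iff R0^c < 1.) -/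
open Matrix

/-- For the constant-transmission SIR model, `(b/μ, 0, 0)` is an equilibrium, and
the infectious-block Jacobian `A` there has both eigenvalues with negative real
part — equivalently `trace A < 0` and `det A > 0` — if and only if `R0^c < 1`. -/
theorem macroSIR_dfe_stability
    (b μ β lg ν1 ν2 R0c : ℝ)
    (hb : 0 < b) (hμ : 0 < μ) (hβ : 0 < β) (hlg : 0 < lg)
    (hν1 : ν1 ∈ Set.Ioo (0:ℝ) 1) (hν2 : ν2 ∈ Set.Ioo (0:ℝ) 1)
    (hR0c : R0c = β * (b / μ) * (lg * ν1 + lg * ν2 + μ) / ((lg * ν1 + μ) * (lg * ν2 + μ)))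
    (A : Matrix (Fin 2) (Fin 2) ℝ)
    (hA : A = !![β * b / μ - lg * ν1 - μ, β * b / μ;
                 lg * ν1, -(lg * ν2 + μ)]) :
    (b - β * (b / μ) * (0 + 0) - μ * (b / μ) = 0 ∧
     β * (b / μ) * (0 + 0) - (lg * ν1 + μ) * 0 = 0 ∧
     lg * ν1 * 0 - (lg * ν2 + μ) * 0 = 0) ∧
    ((A.trace < 0 ∧ 0 < A.det) ↔ R0c < 1) := by
  obtain ⟨hν1a, hν1b⟩ := hν1
  obtain ⟨hν2a, hν2b⟩ := hν2
  have h1 : 0 < lg * ν1 + μ := by positivity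
  have h2 : 0 < lg * ν2 + μ := by positivity
  have hμne : μ ≠ 0 := ne_of_gt hμ
  constructor
  · refine ⟨?_, by ring, by ring⟩
    field_simp
    ring
  · have htr : A.trace = β * b / μ - lg * ν1 - μ + -(lg * ν2 + μ) := by
      subst hA
      simp [Matrix.trace_fin_two]
    have hdet : A.det = (β * b / μ - lg * ν1 - μ) * (-(lg * ν2 + μ)) -
        β * b / μ * (lg * ν1) := by
      subst hA
      simp [Matrix.det_fin_two]
    have hkey : R0c < 1 ↔ β * (b / μ) * (lg * ν1 + lg * ν2 + μ) <
        (lg * ν1 + μ) * (lg * ν2 + μ) := by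
      rw [hR0c, div_lt_one (by positivity)]
    have hbd : β * b / μ = β * (b / μ) := by ring
    rw [htr, hdet, hkey, hbd]
    constructor
    · rintro ⟨_, hd⟩
      nlinarith [hd, mul_pos h1 h2]
    · intro h
      have hx : β * (b / μ) * (lg * ν2 + μ) < (lg * ν1 + μ) * (lg * ν2 + μ) := by
        nlinarith [mul_pos hβ (div_pos hb hμ), mul_pos hlg hν1a]
      have hx2 : β * (b / μ) < lg * ν1 + μ := lt_of_mul_lt_mul_right hx h2.le
      constructor
      · nlinarith
      · nlinarith
end

section
/- The right eigenvector w = (w₁, 1, w₃, w₄, w₅) with w₁ = -(λγν1+μ)/μ, w₃ = λγν1/(λγν2+μ), w₄ = (v0(λγν1+μ) + λγν1(1-ν1))/(λγν1(2-ν1)+μ), and w₅ = λγν1·[ν1(λγ+μ) + v0(1-ν1)(λγν1+μ)]/((λγν1(2-ν1)+μ)(λγν2(2-ν2)+μ)) satisfies J(DFE)·w = 0, where J(DFE) is the 5×5 Jacobian of system (macro2) at the disease-free equilibrium evaluated at the critical transmission rate β = β̄ (i.e., at R0 = 1). -/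
set_option maxHeartbeats 2000000


open Matrix

/-- The stated right eigenvector `w` lies in the kernel of the Jacobian of
(macro2) at the disease-free equilibrium with the critical transmission rate:
`J(DFE) ⬝ w = 0`. -/
theorem right_eigenvector_kernel
    (b μ lg ν1 ν2 v0 βbar : ℝ)
    (hb : 0 < b) (hμ : 0 < μ) (hlg : 0 < lg)
    (hν1 : ν1 ∈ Set.Ioo (0:ℝ) 1) (hν2 : ν2 ∈ Set.Ioo (0:ℝ) 1)
    (hv0 : v0 ∈ Set.Ioo (0:ℝ) 1)
    (hβbar : βbar = (μ / b) *
      ((lg * ν1 + μ) * (lg * ν1 * (2 - ν1) + μ) * (lg * ν2 * (2 - ν2) + μ)) /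
      (lg * ν1 * (lg * ν1 * (1 - ν2) ^ 2 + lg * ν2 * (2 - ν2) + μ)
        + v0 * (lg * ν1 + μ) * (lg * ν1 * (1 - ν1) + lg * ν2 * (2 - ν2) + μ)))
    (J : Matrix (Fin 5) (Fin 5) ℝ)
    (hJ : J = !![-μ, 0, 0, -(βbar * b / μ), -(βbar * b / μ);
                 0, -(lg * ν1 + μ), 0, βbar * b / μ, βbar * b / μ;
                 0, lg * ν1, -(lg * ν2 + μ), 0, 0;
                 0, lg * ν1 * (1 - ν1), 0, βbar * v0 * b / μ - lg * ν1 * (2 - ν1) - μ, βbar * v0 * b / μ;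
                 0, lg * ν1 ^ 2, 0, lg * ν1 * (1 - ν1), -(lg * ν2 * (2 - ν2) + μ)])
    (w : Fin 5 → ℝ)
    (hw : w = ![-(lg * ν1 + μ) / μ, 1, lg * ν1 / (lg * ν2 + μ),
      (v0 * (lg * ν1 + μ) + lg * ν1 * (1 - ν1)) / (lg * ν1 * (2 - ν1) + μ),
      lg * ν1 * (ν1 * (lg + μ) + v0 * (1 - ν1) * (lg * ν1 + μ)) /
        ((lg * ν1 * (2 - ν1) + μ) * (lg * ν2 * (2 - ν2) + μ))]) :
    J.mulVec w = 0 := by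
  obtain ⟨h10, h11⟩ := hν1
  obtain ⟨h20, h21⟩ := hν2
  obtain ⟨hv00, hv01⟩ := hv0
  have hμ0 : μ ≠ 0 := ne_of_gt hμ
  have hb0 : b ≠ 0 := ne_of_gt hb
  have h1 : lg * ν2 + μ ≠ 0 := by positivity
  have h2 : lg * ν1 * (2 - ν1) + μ ≠ 0 := by
    have : (0:ℝ) < 2 - ν1 := by linarith
    positivity
  have h3 : lg * ν2 * (2 - ν2) + μ ≠ 0 := by
    have : (0:ℝ) < 2 - ν2 := by linarith
    positivity
  have hD : lg * ν1 * (lg * ν1 * (1 - ν2) ^ 2 + lg * ν2 * (2 - ν2) + μ)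
      + v0 * (lg * ν1 + μ) * (lg * ν1 * (1 - ν1) + lg * ν2 * (2 - ν2) + μ) ≠ 0 := by
    have e1 : (0:ℝ) < 2 - ν2 := by linarith
    have e2 : (0:ℝ) < 1 - ν1 := by linarith
    positivity
  have hD' : lg * ν1 * (lg * (ν1 * (1 - ν2) ^ 2 + ν2 * (2 - ν2)) + μ) +
      (lg * ν1 + μ) * v0 * (lg * (ν1 * (1 - ν1) + ν2 * (2 - ν2)) + μ) ≠ 0 := by
    convert hD using 1; ring
  subst hJ hw
  funext i
  fin_cases i <;>
    simp [Matrix.mulVec, dotProduct, Fin.sum_univ_five] <;>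
    (try rw [hβbar]) <;>
    field_simp <;>
    ring
end

section
/- At any endemic equilibrium of system (macro2), n_{I1}^E = b·[λγν1(1-ν1) + v0(λγν1+μ)]/((λγν1+μ)(λγν1(2-ν1)+μ))·(1 - 1/R0); in particular n_{I1}^E > 0 if and only if R0 > 1. -/
set_option maxHeartbeats 1000000 in
/-- At any endemic equilibrium of (macro2), the viral-load momentum `n_{I1}`
equals the explicit formula in terms of `R0`; in particular `n_{I1} > 0 ↔ R0 > 1`. -/
theorem endemic_nI1_formula
    (b μ β lg ν1 ν2 v0 R0 : ℝ)
    (hb : 0 < b) (hμ : 0 < μ) (hβ : 0 < β) (hlg : 0 < lg)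
    (hν1 : ν1 ∈ Set.Ioo (0:ℝ) 1) (hν2 : ν2 ∈ Set.Ioo (0:ℝ) 1)
    (hv0 : v0 ∈ Set.Ioo (0:ℝ) 1)
    (hR0 : R0 = β * (b / μ) *
      (lg * ν1 * (lg * ν1 * (1 - ν2) ^ 2 + lg * ν2 * (2 - ν2) + μ)
        + v0 * (lg * ν1 + μ) * (lg * ν1 * (1 - ν1) + lg * ν2 * (2 - ν2) + μ)) /
      ((lg * ν1 + μ) * (lg * ν1 * (2 - ν1) + μ) * (lg * ν2 * (2 - ν2) + μ)))
    (ρS ρI1 ρI2 nI1 nI2 : ℝ)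
    (hρI1 : 0 < ρI1) (hρI2 : 0 < ρI2)
    (e1 : b - β * ρS * (nI1 + nI2) - μ * ρS = 0)
    (e2 : β * ρS * (nI1 + nI2) - lg * ν1 * ρI1 - μ * ρI1 = 0)
    (e3 : lg * ν1 * ρI1 - lg * ν2 * ρI2 - μ * ρI2 = 0)
    (e4 : β * v0 * ρS * (nI1 + nI2) + lg * ν1 * (1 - ν1) * ρI1
        - lg * ν1 * (2 - ν1) * nI1 - μ * nI1 = 0)
    (e5 : lg * ν1 ^ 2 * ρI1 + lg * ν1 * (1 - ν1) * nI1
        - lg * ν2 * (2 - ν2) * nI2 - μ * nI2 = 0) :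
    nI1 = b * (lg * ν1 * (1 - ν1) + v0 * (lg * ν1 + μ)) /
      ((lg * ν1 + μ) * (lg * ν1 * (2 - ν1) + μ)) * (1 - 1 / R0) ∧
    (0 < nI1 ↔ 1 < R0) := by
  obtain ⟨hν1a, hν1b⟩ := hν1
  obtain ⟨hν2a, hν2b⟩ := hν2
  obtain ⟨hv0a, hv0b⟩ := hv0
  have h2ν1 : 0 < 2 - ν1 := by linarith
  have h2ν2 : 0 < 2 - ν2 := by linarith
  have h1ν1 : 0 < 1 - ν1 := by linarith
  have ha1 : 0 < lg * ν1 + μ := by positivity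
  have hc1 : 0 < lg * ν1 * (2 - ν1) + μ := by
    have := mul_pos (mul_pos hlg hν1a) h2ν1; linarith
  have hc2 : 0 < lg * ν2 * (2 - ν2) + μ := by
    have := mul_pos (mul_pos hlg hν2a) h2ν2; linarith
  have hm : 0 < lg * ν1 * (1 - ν1) := mul_pos (mul_pos hlg hν1a) h1ν1
  -- numerator positivity
  have hnum : 0 < lg * ν1 * (lg * ν1 * (1 - ν2) ^ 2 + lg * ν2 * (2 - ν2) + μ)
      + v0 * (lg * ν1 + μ) * (lg * ν1 * (1 - ν1) + lg * ν2 * (2 - ν2) + μ) := by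
    have t1 : 0 < lg * ν1 * (1 - ν2) ^ 2 + lg * ν2 * (2 - ν2) + μ := by
      nlinarith [sq_nonneg (1 - ν2), mul_pos (mul_pos hlg hν2a) h2ν2,
        mul_nonneg (mul_pos hlg hν1a).le (sq_nonneg (1 - ν2))]
    have t2 : 0 < lg * ν1 * (1 - ν1) + lg * ν2 * (2 - ν2) + μ := by
      nlinarith [mul_pos (mul_pos hlg hν2a) h2ν2]
    have := mul_pos (mul_pos hlg hν1a) t1
    have := mul_pos (mul_pos hv0a ha1) t2
    linarith
  have hR0pos : 0 < R0 := by
    rw [hR0]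
    exact div_pos (mul_pos (mul_pos hβ (div_pos hb hμ)) hnum)
      (mul_pos (mul_pos ha1 hc1) hc2)
  -- key algebraic consequences
  have h4 : (lg * ν1 * (2 - ν1) + μ) * nI1
      = (v0 * (lg * ν1 + μ) + lg * ν1 * (1 - ν1)) * ρI1 := by
    linear_combination v0 * e2 - e4
  have h5 : (lg * ν2 * (2 - ν2) + μ) * nI2
      = lg * ν1 ^ 2 * ρI1 + lg * ν1 * (1 - ν1) * nI1 := by
    linear_combination -e5
  have hμρS : μ * ρS = b - (lg * ν1 + μ) * ρI1 := by linear_combination -e1 - e2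
  have hkey' : β * ρS * (lg * ν1 * (lg * ν1 * (1 - ν2) ^ 2 + lg * ν2 * (2 - ν2) + μ)
      + v0 * (lg * ν1 + μ) * (lg * ν1 * (1 - ν1) + lg * ν2 * (2 - ν2) + μ)) * ρI1
      = (lg * ν1 + μ) * ((lg * ν1 * (2 - ν1) + μ) * (lg * ν2 * (2 - ν2) + μ)) * ρI1 := by
    linear_combination ((lg * ν1 * (2 - ν1) + μ) * (lg * ν2 * (2 - ν2) + μ)) * e2
      - β * ρS * ((lg * ν2 * (2 - ν2) + μ) + lg * ν1 * (1 - ν1)) * h4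
      - β * ρS * (lg * ν1 * (2 - ν1) + μ) * h5
  have hkey : β * ρS * (lg * ν1 * (lg * ν1 * (1 - ν2) ^ 2 + lg * ν2 * (2 - ν2) + μ)
      + v0 * (lg * ν1 + μ) * (lg * ν1 * (1 - ν1) + lg * ν2 * (2 - ν2) + μ))
      = (lg * ν1 + μ) * ((lg * ν1 * (2 - ν1) + μ) * (lg * ν2 * (2 - ν2) + μ)) :=
    mul_right_cancel₀ hρI1.ne' hkey'
  have hR0' : R0 * ((lg * ν1 + μ) * (lg * ν1 * (2 - ν1) + μ) * (lg * ν2 * (2 - ν2) + μ)) * μ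
      = β * b * (lg * ν1 * (lg * ν1 * (1 - ν2) ^ 2 + lg * ν2 * (2 - ν2) + μ)
      + v0 * (lg * ν1 + μ) * (lg * ν1 * (1 - ν1) + lg * ν2 * (2 - ν2) + μ)) := by
    rw [hR0]; field_simp
  have hbR0 : μ * ρS * R0 = b := by
    have hcancel : μ * ρS * R0 * ((lg * ν1 + μ) * ((lg * ν1 * (2 - ν1) + μ)
        * (lg * ν2 * (2 - ν2) + μ)))
        = b * ((lg * ν1 + μ) * ((lg * ν1 * (2 - ν1) + μ) * (lg * ν2 * (2 - ν2) + μ))) := by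
      linear_combination ρS * hR0' + b * hkey
    exact mul_right_cancel₀ (by positivity) hcancel
  have hdiv : μ * ρS = b / R0 := (eq_div_iff hR0pos.ne').mpr hbR0
  have hfrac : (lg * ν1 + μ) * ρI1 = b * (1 - 1 / R0) := by
    have hb' : b * (1 - 1 / R0) = b - b / R0 := by field_simp
    rw [hb']; linarith [hμρS, hdiv]
  have hform : nI1 = b * (lg * ν1 * (1 - ν1) + v0 * (lg * ν1 + μ)) /
      ((lg * ν1 + μ) * (lg * ν1 * (2 - ν1) + μ)) * (1 - 1 / R0) := by
    rw [div_mul_eq_mul_div, eq_div_iff (by positivity : ((lg * ν1 + μ) * (lg * ν1 * (2 - ν1) + μ) : ℝ) ≠ 0)]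
    linear_combination (lg * ν1 + μ) * h4 + (v0 * (lg * ν1 + μ) + lg * ν1 * (1 - ν1)) * hfrac
  have hnI1pos : 0 < nI1 := by
    have hP : 0 < (v0 * (lg * ν1 + μ) + lg * ν1 * (1 - ν1)) * ρI1 :=
      mul_pos (by positivity) hρI1
    nlinarith [h4, hc1, hP]
  have hR0gt : 1 < R0 := by
    have haρ : 0 < (lg * ν1 + μ) * ρI1 := mul_pos ha1 hρI1
    have h1 : b / R0 < b := by linarith [hdiv, hμρS, haρ]
    have h2 : b < b * R0 := (div_lt_iff₀ hR0pos).mp h1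
    exact lt_of_mul_lt_mul_left (by linarith : b * 1 < b * R0) hb.le
  exact ⟨hform, ⟨fun _ => hR0gt, fun _ => hnI1pos⟩⟩
end
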